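/- arXiv:1702.02611 — 6 statements merged into one kernel-verified Lean document; each statement's English description precedes it below -/
import Mathlib

section
/- The two definitions of partial action coincide: a partially defined map m : G × X ⇀ X satisfying (PA1) if g·x is defined then g⁻¹·(g·x) is defined and equals x; (PA2) if g·(h·x) is defined then (gh)·x is defined and equals g·(h·x); (PA3) 1·x is always defined and equals x, determines (and is determined by) a family of bijections m_g : X_{g⁻¹} → X_g (where X_{g⁻¹} = {x | g·x defined}) such that X_1 = X, m_1 = id, m_g(X_{g⁻¹} ∩ X_h) = X_g ∩ X_{gh}, and m_g ∘ m_h = m_{gh} on X_{h⁻¹} ∩ X_{(gh)⁻¹}. -/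
structure PartialAction (G : Type*) (X : Type*) [Group G] where
  dom : G → Set X
  act : G → X → X
  mem_dom_one : ∀ x, x ∈ dom 1
  act_one : ∀ x, act 1 x = x
  mem_dom_inv : ∀ g x, x ∈ dom g → act g x ∈ dom g⁻¹
  act_inv_act : ∀ g x, x ∈ dom g → act g⁻¹ (act g x) = x
  mem_dom_mul : ∀ g h x, x ∈ dom h → act h x ∈ dom g → x ∈ dom (g * h)
  act_mul : ∀ g h x, x ∈ dom h → act h x ∈ dom g → act (g * h) x = act g (act h x)

namespace PartialAction

variable {G X : Type*} [Group G]

/-- The orbit equivalence relation `E^p_G` of a partial action. -/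
def orbitRel (pa : PartialAction G X) (x y : X) : Prop :=
  ∃ g, x ∈ pa.dom g ∧ pa.act g x = y

/-- `G^x = {g : G | g · x is defined}`. -/
def stabDom (pa : PartialAction G X) (x : X) : Set G := {g | x ∈ pa.dom g}

/-- The orbit equivalence relation of the partial action `\widehat m` on `G × X`,
`\widehat m_u (h, x) = (h u⁻¹, u · x)`. -/
def hatOrbitRel (pa : PartialAction G X) (p q : G × X) : Prop :=
  ∃ u, p.2 ∈ pa.dom u ∧ q = (p.1 * u⁻¹, pa.act u p.2)

/-- Vaught transform `A^{△V}`. -/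
def vaughtDelta [TopologicalSpace G] (pa : PartialAction G X) (A : Set X) (V : Set G) : Set X :=
  {x | ¬ IsMeagre {g : ↥(V ∩ pa.stabDom x) | pa.act (g : G) x ∈ A}}

/-- Vaught transform `A^{*V}`. -/
def vaughtStar [TopologicalSpace G] (pa : PartialAction G X) (A : Set X) (V : Set G) : Set X :=
  {x | {g : ↥(V ∩ pa.stabDom x) | pa.act (g : G) x ∈ A} ∈ residual ↥(V ∩ pa.stabDom x)}

end PartialAction

/-- the two definitions of a partial action coincide. A partially defined
map `m : G × X ⇀ X` (encoded by a total map `act` together with domains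
`dom g = X_{g⁻¹} = {x | g·x is defined}`) satisfies (PA1)-(PA3) iff the maps
`m_g = act g : dom g → dom g⁻¹` form a family of bijections with `X_1 = X`, `m_1 = id`,
`m_g (X_{g⁻¹} ∩ X_h) = X_g ∩ X_{gh}` and `m_g ∘ m_h = m_{gh}` on `X_{h⁻¹} ∩ X_{(gh)⁻¹}`
(here `X_g = dom g⁻¹`). -/
theorem partialAction_iff_family {G X : Type*} [Group G]
    (dom : G → Set X) (act : G → X → X) :
    ((∀ x, x ∈ dom 1 ∧ act 1 x = x) ∧
     (∀ g x, x ∈ dom g → act g x ∈ dom g⁻¹ ∧ act g⁻¹ (act g x) = x) ∧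
     (∀ g h x, x ∈ dom h → act h x ∈ dom g →
        x ∈ dom (g * h) ∧ act (g * h) x = act g (act h x)))
    ↔
    ((dom 1 = Set.univ) ∧ (∀ x, act 1 x = x) ∧
     (∀ g, Set.BijOn (act g) (dom g) (dom g⁻¹)) ∧
     (∀ g h, act g '' (dom g ∩ dom h⁻¹) = dom g⁻¹ ∩ dom (g * h)⁻¹) ∧
     (∀ g h x, x ∈ dom h ∩ dom (g * h) → act (g * h) x = act g (act h x))) := by
  constructor
  · rintro ⟨h1, h2, h3⟩
    have key : ∀ g h x, x ∈ dom h → x ∈ dom (g * h) →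
        act h x ∈ dom g ∧ act (g * h) x = act g (act h x) := by
      intro g h x hx hx'
      obtain ⟨hd, he⟩ := h2 h x hx
      obtain ⟨hd2, he2⟩ := h3 (g * h) h⁻¹ (act h x) hd (by rw [he]; exact hx')
      rw [he] at he2
      constructor
      · simpa [mul_inv_cancel_right] using hd2
      · have h' : act (g * h * h⁻¹) (act h x) = act g (act h x) := by
          rw [mul_inv_cancel_right]
        rw [h'] at he2
        exact he2.symm
    refine ⟨Set.eq_univ_of_forall fun x => (h1 x).1, fun x => (h1 x).2, ?_, ?_, ?_⟩
    · intro g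
      refine ⟨fun x hx => (h2 g x hx).1, ?_, ?_⟩
      · intro a ha b hb hab
        have h1' := (h2 g a ha).2
        have h2' := (h2 g b hb).2
        rw [← h1', ← h2', hab]
      · intro y hy
        obtain ⟨hd, he⟩ := h2 g⁻¹ y hy
        rw [inv_inv] at hd he
        exact ⟨act g⁻¹ y, hd, he⟩
    · intro g h
      ext y
      constructor
      · rintro ⟨x, ⟨hxg, hxh⟩, rfl⟩
        obtain ⟨hd, he⟩ := h2 g x hxg
        refine ⟨hd, ?_⟩
        have := (h3 h⁻¹ g⁻¹ (act g x) hd (by rw [he]; exact hxh)).1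
        simpa [mul_inv_rev] using this
      · rintro ⟨hy1, hy2⟩
        obtain ⟨hd, he⟩ := h2 g⁻¹ y hy1
        rw [inv_inv] at hd he
        rw [mul_inv_rev] at hy2
        have := (key h⁻¹ g⁻¹ y hy1 hy2).1
        exact ⟨act g⁻¹ y, ⟨hd, this⟩, he⟩
    · rintro g h x ⟨hx1, hx2⟩
      exact (key g h x hx1 hx2).2
  · rintro ⟨F1, F2, F3, F4, F5⟩
    have pa1 : ∀ g x, x ∈ dom g → act g x ∈ dom g⁻¹ ∧ act g⁻¹ (act g x) = x := by
      intro g x hx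
      refine ⟨(F3 g).mapsTo hx, ?_⟩
      have hx1 : x ∈ dom (g⁻¹ * g) := by simp [F1]
      have := F5 g⁻¹ g x ⟨hx, hx1⟩
      rw [inv_mul_cancel, F2] at this
      exact this.symm
    refine ⟨fun x => ⟨by simp [F1], F2 x⟩, pa1, ?_⟩
    intro g h x hxh hgx
    have himg := F4 h⁻¹ g⁻¹
    rw [inv_inv, inv_inv, mul_inv_rev, inv_inv, inv_inv] at himg
    have hmem : act h⁻¹ (act h x) ∈ dom h ∩ dom (g * h) := by
      rw [← himg]
      exact Set.mem_image_of_mem _ ⟨(pa1 h x hxh).1, hgx⟩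
    rw [(pa1 h x hxh).2] at hmem
    exact ⟨hmem.2, F5 g h x ⟨hxh, hmem.2⟩⟩
end

section
/- Let m be a partial action of a group G on a set X, let R be the equivalence relation on G × X defined by (g,x) R (h,y) iff x ∈ X_{g⁻¹h} and m_{h⁻¹g}(x) = y, and let \widehat{E}^p_G be the orbit equivalence relation of the partial action \widehat{m}_u(h,x) = (h u⁻¹, u·x) of G on G × X. Then (g,x) \widehat{E}^p_G (h,y) if and only if (g,x) R (h,y); hence the orbit space (G × X)/\widehat{E}^p_G coincides with the enveloping space X_G = (G × X)/R. -/
/-- The relation `R` used to define the enveloping space `X_G`: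
`(g,x) R (h,y)` iff `x ∈ X_{g⁻¹ h}` and `m_{h⁻¹ g}(x) = y`
(with our conventions `X_{g⁻¹h} = dom (h⁻¹ g)`). -/
def envRel {G X : Type*} [Group G] (pa : PartialAction G X) (p q : G × X) : Prop :=
  p.2 ∈ pa.dom (q.1⁻¹ * p.1) ∧ pa.act (q.1⁻¹ * p.1) p.2 = q.2

/-- `(g,x) \widehat E^p_G (h,y)` iff `(g,x) R (h,y)`; hence the orbit space
`(G × X)/\widehat E^p_G` coincides with the enveloping space `X_G = (G × X)/R`. -/
theorem hatOrbitRel_eq_envRel {G X : Type*} [Group G] (pa : PartialAction G X) :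
    (∀ (g h : G) (x y : X),
      pa.hatOrbitRel (g, x) (h, y) ↔ (x ∈ pa.dom (h⁻¹ * g) ∧ pa.act (h⁻¹ * g) x = y)) ∧
    Quot pa.hatOrbitRel = Quot (envRel pa) := by
  have key : ∀ (g h : G) (x y : X),
      pa.hatOrbitRel (g, x) (h, y) ↔ (x ∈ pa.dom (h⁻¹ * g) ∧ pa.act (h⁻¹ * g) x = y) := by
    intro g h x y
    constructor
    · rintro ⟨u, hu, heq⟩
      obtain ⟨h1, h2⟩ := Prod.mk.injEq .. ▸ heq
      have : h⁻¹ * g = u := by rw [h1]; group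
      rw [this]
      exact ⟨hu, h2.symm⟩
    · rintro ⟨hd, ha⟩
      exact ⟨h⁻¹ * g, hd, by simp [← ha]⟩
  refine ⟨key, ?_⟩
  congr 1
  funext p q
  obtain ⟨g, x⟩ := p; obtain ⟨h, y⟩ := q
  exact propext (key g h x y)
end

section
/- Let m be a continuous topological partial action of a Polish group G on a Polish space X. If A ⊆ X is open and V ⊆ G is a nonempty open set, then A^{△V} = ⋃_{g∈V} {x ∈ X_{g⁻¹} : g·x ∈ A}, and in particular A^{△V} is open in X. -/
/-! If `g ∈ V` moves `x` into the open set `A`, then by continuity of `u ↦ u · x` on `G^x`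
the set `{u ∈ V ∩ G^x : u · x ∈ A}` is a nonempty open subset of `V ∩ G^x`. The latter is a
`G_δ` subset of the Polish group `G`, hence Polish and in particular Baire, so that set is
nonmeager. Conversely a nonmeager set is nonempty. Openness of the union follows from the
continuity of each `m_g` on its open domain. -/

theorem IsGδ.polishSpace {α : Type*} [TopologicalSpace α] [PolishSpace α] {s : Set α}
    (hs : IsGδ s) : PolishSpace s := by
  obtain ⟨T, hTo, hTc, rfl⟩ := hs
  rcases T.eq_empty_or_nonempty with rfl | hne
  · rw [Set.sInter_empty]
    exact isClosed_univ.polishSpace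
  obtain ⟨U, rfl⟩ := hTc.exists_eq_range hne
  rw [Set.sInter_range]
  have : ∀ n, PolishSpace (U n) := fun n => (hTo _ ⟨n, rfl⟩).polishSpace
  -- `⋂ n, U n` embeds as the closed diagonal of `Π n, U n`.
  let diag : (⋂ n, U n : Set α) → ∀ n, U n := fun x n => ⟨x, Set.mem_iInter.1 x.2 n⟩
  have hdiag : Continuous diag := continuous_pi fun n => continuous_subtype_val.subtype_mk _
  have hemb : Topology.IsEmbedding diag :=
    .of_comp hdiag (continuous_apply 0).subtype_val Topology.IsEmbedding.subtypeVal
  have hrange : Set.range diag = ⋂ n, {y : ∀ n, U n | (y n : α) = y 0} := by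
    ext y
    simp only [Set.mem_range, Set.mem_iInter, Set.mem_ofPred_eq]
    refine ⟨fun ⟨x, hx⟩ n => hx ▸ rfl, fun hy => ?_⟩
    exact ⟨⟨y 0, Set.mem_iInter.2 fun n => hy n ▸ (y n).2⟩,
      funext fun n => Subtype.ext (hy n).symm⟩
  have hclosed : IsClosed (Set.range diag) := hrange ▸ isClosed_iInter fun n =>
    isClosed_eq (continuous_apply n).subtype_val (continuous_apply 0).subtype_val
  exact (Topology.IsClosedEmbedding.mk hemb hclosed).polishSpace

namespace PartialAction

variable {G X : Type*} [Group G] [TopologicalSpace G] (pa : PartialAction G X)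

theorem vaughtDelta_subset_biUnion (A : Set X) (V : Set G) :
    pa.vaughtDelta A V ⊆ ⋃ g ∈ V, {x : X | x ∈ pa.dom g ∧ pa.act g x ∈ A} := by
  intro x hx
  obtain ⟨⟨g, hgV, hgx⟩, hgA⟩ := nonempty_of_not_isMeagre hx
  exact Set.mem_biUnion hgV ⟨hgx, hgA⟩

variable [TopologicalSpace X]

theorem isGδ_stabDom (hGδ : IsGδ {p : G × X | p.2 ∈ pa.dom p.1}) (x : X) :
    IsGδ (pa.stabDom x) :=
  hGδ.preimage (continuous_id.prodMk continuous_const)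

theorem continuousOn_act_left
    (hcont : ContinuousOn (fun p : G × X => pa.act p.1 p.2) {p : G × X | p.2 ∈ pa.dom p.1})
    (x : X) : ContinuousOn (pa.act · x) (pa.stabDom x) :=
  hcont.comp (continuous_id.prodMk continuous_const).continuousOn fun _ h => h

theorem continuousOn_act_right
    (hcont : ContinuousOn (fun p : G × X => pa.act p.1 p.2) {p : G × X | p.2 ∈ pa.dom p.1})
    (g : G) : ContinuousOn (pa.act g) (pa.dom g) :=
  hcont.comp (continuous_const.prodMk continuous_id).continuousOn fun _ h => h

theorem isOpen_dom_inter_preimage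
    (hcont : ContinuousOn (fun p : G × X => pa.act p.1 p.2) {p : G × X | p.2 ∈ pa.dom p.1})
    (hdom : ∀ g, IsOpen (pa.dom g)) {A : Set X} (hA : IsOpen A) (g : G) :
    IsOpen (pa.dom g ∩ pa.act g ⁻¹' A) :=
  (pa.continuousOn_act_right hcont g).isOpen_inter_preimage (hdom g) hA

theorem biUnion_subset_vaughtDelta [PolishSpace G]
    (hcont : ContinuousOn (fun p : G × X => pa.act p.1 p.2) {p : G × X | p.2 ∈ pa.dom p.1})
    (hGδ : IsGδ {p : G × X | p.2 ∈ pa.dom p.1})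
    {A : Set X} (hA : IsOpen A) {V : Set G} (hV : IsOpen V) :
    ⋃ g ∈ V, {x : X | x ∈ pa.dom g ∧ pa.act g x ∈ A} ⊆ pa.vaughtDelta A V := by
  intro x hx
  obtain ⟨g, hgV, hgx, hgA⟩ := Set.mem_iUnion₂.1 hx
  have : PolishSpace ↥(V ∩ pa.stabDom x) :=
    (hV.isGδ.inter (pa.isGδ_stabDom hGδ x)).polishSpace
  have hopen : IsOpen {u : ↥(V ∩ pa.stabDom x) | pa.act u x ∈ A} :=
    hA.preimage ((pa.continuousOn_act_left hcont x).mono Set.inter_subset_right).domRestrict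
  exact not_isMeagre_of_isOpen hopen ⟨⟨g, hgV, hgx⟩, hgA⟩

end PartialAction

theorem vaughtDelta_open_general {G X : Type*} [Group G] [TopologicalSpace G]
    [PolishSpace G] [TopologicalSpace X]
    (pa : PartialAction G X)
    (hdom : ∀ g, IsOpen (pa.dom g))
    (hcont : ContinuousOn (fun p : G × X => pa.act p.1 p.2) {p : G × X | p.2 ∈ pa.dom p.1})
    (hGδ : IsGδ {p : G × X | p.2 ∈ pa.dom p.1})
    (A : Set X) (hA : IsOpen A) (V : Set G) (hVopen : IsOpen V) :
    pa.vaughtDelta A V = ⋃ g ∈ V, {x : X | x ∈ pa.dom g ∧ pa.act g x ∈ A} ∧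
    IsOpen (pa.vaughtDelta A V) := by
  have heq : pa.vaughtDelta A V = ⋃ g ∈ V, {x : X | x ∈ pa.dom g ∧ pa.act g x ∈ A} :=
    (pa.vaughtDelta_subset_biUnion A V).antisymm
      (pa.biUnion_subset_vaughtDelta hcont hGδ hA hVopen)
  exact ⟨heq, heq ▸ isOpen_biUnion fun g _ => pa.isOpen_dom_inter_preimage hcont hdom hA g⟩

/-- for a continuous partial action of a Polish group on a Polish space
(with `G*X` a `G_δ` set), if `A` is open then
`A^{△V} = ⋃_{g ∈ V} {x ∈ X_{g⁻¹} : g · x ∈ A}`, which is an open set. -/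
theorem vaughtDelta_open {G X : Type*} [Group G] [TopologicalSpace G] [IsTopologicalGroup G]
    [PolishSpace G] [TopologicalSpace X] [PolishSpace X]
    (pa : PartialAction G X)
    (hdom : ∀ g, IsOpen (pa.dom g))
    (hcont : ContinuousOn (fun p : G × X => pa.act p.1 p.2) {p : G × X | p.2 ∈ pa.dom p.1})
    (hGδ : IsGδ {p : G × X | p.2 ∈ pa.dom p.1})
    (A : Set X) (hA : IsOpen A) (V : Set G) (hV : V.Nonempty) (hVopen : IsOpen V) :
    pa.vaughtDelta A V = ⋃ g ∈ V, {x : X | x ∈ pa.dom g ∧ pa.act g x ∈ A} ∧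
    IsOpen (pa.vaughtDelta A V) :=
  vaughtDelta_open_general pa hdom hcont hGδ A hA V hVopen
end

section
/- Let m be a continuous topological partial action of a Polish group G on a Polish space X with G*X a G_δ subset of G × X, and let V ⊆ G be a nonempty open set. If A ⊆ X is Borel, then both Vaught transforms A^{△V} and A^{*V} are Borel subsets of X. -/
/-!
For open `A` the transform `A^{△V}` is a union of open sets `{x | g · x ∈ A}`, since each
`V ∩ G^x` is a `G_δ` subset of a Polish group and hence a Baire space. Transforms commute with
countable unions, and `A^{*V}` is the complement of `(Aᶜ)^{△V}`. For complements one uses the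
Baire property of the sections `{g ∈ V ∩ G^x | g · x ∈ A}`: such a section is nonmeagre exactly
when it is comeagre on `U ∩ G^x ≠ ∅` for some basic open `U ⊆ V`, so that
`A^{△V} = ⋃ {U ⊆ V basic} (⋃ g ∈ U, X_g) ∩ A^{*U}`, a countable union. Induction over the
Borel sets finishes the proof.
-/

open Set Set.Notation Topology Filter TopologicalSpace

theorem IsGδ.baireSpace_of_polishSpace {α : Type*} [TopologicalSpace α] [PolishSpace α]
    {s : Set α} (hs : IsGδ s) : BaireSpace s := by
  have : PolishSpace (closure s) := isClosed_closure.polishSpace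
  have : BaireSpace ((↑) ⁻¹' s : Set (closure s)) :=
    (hs.preimage continuous_subtype_val).baireSpace_of_dense
      (by simp [Subtype.dense_iff, inter_eq_right.mpr subset_closure])
  have e : ((↑) ⁻¹' s : Set (closure s)) ≃ₜ s := ⟨⟨fun x => ⟨x, x.2⟩,
    fun x => ⟨⟨x, subset_closure x.2⟩, x.2⟩, fun _ => rfl, fun _ => rfl⟩, by fun_prop, by fun_prop⟩
  exact e.baireSpace

theorem BaireMeasurableSet.exists_isOpen_isMeagre_diff {α : Type*} [TopologicalSpace α]
    {s : Set α} (hs : BaireMeasurableSet s) (h : ¬IsMeagre s) :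
    ∃ o, IsOpen o ∧ o.Nonempty ∧ IsMeagre (o \ s) := by
  obtain ⟨o, ho, hso⟩ := hs.residualEq_isOpen
  have hdiff : IsMeagre (o \ s) := eventuallyEq_empty.1 <| by
    simpa using hso.symm.diff (EventuallyEq.refl _ s)
  refine ⟨o, ho, nonempty_iff_ne_empty.2 fun ho_empty => h ?_, hdiff⟩
  exact eventuallyEq_empty.1 (ho_empty ▸ hso)

theorem IsMeagre.preimage_inclusion_inter {α : Type*} [TopologicalSpace α] {U V W : Set α}
    (hU : IsOpen U) (hUV : U ⊆ V) {m : Set ↥(V ∩ W)} (hm : IsMeagre m) :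
    IsMeagre (inclusion (inter_subset_inter_left W hUV) ⁻¹' m) := by
  have hst := inter_subset_inter_left W hUV
  have hopen : IsOpen ((V ∩ W) ↓∩ (U ∩ W)) := by
    convert hU.preimage continuous_subtype_val using 1
    ext g
    exact and_iff_left g.2.2
  exact hm.preimage_of_isOpenMap (continuous_inclusion hst)
    (IsOpenEmbedding.inclusion hst hopen).isOpenMap

namespace PartialAction

variable {G X : Type*} [Group G] (pa : PartialAction G X)

def orbitMap (x : X) (W : Set G) : ↥(W ∩ pa.stabDom x) → X := fun g => pa.act g x

variable [TopologicalSpace G] {pa}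

lemma mem_vaughtDelta {A : Set X} {V : Set G} {x : X} :
    x ∈ pa.vaughtDelta A V ↔ ¬IsMeagre (pa.orbitMap x V ⁻¹' A) := Iff.rfl

lemma mem_vaughtStar {A : Set X} {V : Set G} {x : X} :
    x ∈ pa.vaughtStar A V ↔ IsMeagre (pa.orbitMap x V ⁻¹' Aᶜ) := by
  rw [IsMeagre, preimage_compl, compl_compl]
  rfl

lemma vaughtStar_eq_compl_vaughtDelta_compl (A : Set X) (V : Set G) :
    pa.vaughtStar A V = (pa.vaughtDelta Aᶜ V)ᶜ := by
  ext x
  rw [mem_compl_iff, mem_vaughtDelta, not_not, mem_vaughtStar]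

lemma vaughtDelta_iUnion {ι : Type*} [Countable ι] (A : ι → Set X) (V : Set G) :
    pa.vaughtDelta (⋃ i, A i) V = ⋃ i, pa.vaughtDelta (A i) V := by
  ext x
  simp only [mem_iUnion, mem_vaughtDelta, preimage_iUnion]
  constructor
  · intro h
    by_contra! hA
    exact h (isMeagre_iUnion hA)
  · rintro ⟨i, hi⟩ h
    exact hi (h.mono (subset_iUnion (fun i => pa.orbitMap x V ⁻¹' A i) i))

lemma vaughtDelta_mono {A : Set X} {U V : Set G} (hU : IsOpen U) (hUV : U ⊆ V) :
    pa.vaughtDelta A U ⊆ pa.vaughtDelta A V :=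
  fun _ hx hV => hx (hV.preimage_inclusion_inter hU hUV)

variable [TopologicalSpace X]

lemma continuous_orbitMap
    (hcont : ContinuousOn (fun p : G × X => pa.act p.1 p.2) {p : G × X | p.2 ∈ pa.dom p.1})
    (x : X) (W : Set G) : Continuous (pa.orbitMap x W) :=
  hcont.comp_continuous (continuous_subtype_val.prodMk continuous_const) fun g => g.2.2

lemma baireSpace_inter_stabDom [PolishSpace G] (hGδ : IsGδ {p : G × X | p.2 ∈ pa.dom p.1})
    {V : Set G} (hV : IsOpen V) (x : X) : BaireSpace ↥(V ∩ pa.stabDom x) :=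
  (hV.isGδ.inter (hGδ.preimage (continuous_id.prodMk continuous_const))).baireSpace_of_polishSpace

lemma isOpen_vaughtDelta [PolishSpace G] (hdom : ∀ g, IsOpen (pa.dom g))
    (hcont : ContinuousOn (fun p : G × X => pa.act p.1 p.2) {p : G × X | p.2 ∈ pa.dom p.1})
    (hGδ : IsGδ {p : G × X | p.2 ∈ pa.dom p.1}) {A : Set X} (hA : IsOpen A) {V : Set G}
    (hV : IsOpen V) : IsOpen (pa.vaughtDelta A V) := by
  have heq : pa.vaughtDelta A V = ⋃ g ∈ V, pa.dom g ∩ pa.act g ⁻¹' A := by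
    ext x
    have := baireSpace_inter_stabDom hGδ hV x
    have hopen := hA.preimage (continuous_orbitMap hcont x V)
    simp only [mem_vaughtDelta, mem_iUnion, exists_prop]
    constructor
    · intro h
      obtain ⟨g, hg⟩ := nonempty_of_not_isMeagre h
      exact ⟨g, g.2.1, g.2.2, hg⟩
    · rintro ⟨g, hgV, hgx, hgA⟩
      exact not_isMeagre_of_isOpen hopen ⟨⟨g, hgV, hgx⟩, hgA⟩
  have hcont_g (g : G) : ContinuousOn (pa.act g) (pa.dom g) :=
    hcont.comp (continuous_const.prodMk continuous_id).continuousOn fun _ hy => hy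
  rw [heq]
  exact isOpen_biUnion fun g _ => (hcont_g g).isOpen_inter_preimage (hdom g) hA

lemma mem_vaughtDelta_of_mem_vaughtStar [PolishSpace G]
    (hGδ : IsGδ {p : G × X | p.2 ∈ pa.dom p.1}) {A : Set X} {U : Set G} (hU : IsOpen U) {x : X}
    (hx : (U ∩ pa.stabDom x).Nonempty) (hxA : x ∈ pa.vaughtStar A U) :
    x ∈ pa.vaughtDelta A U := by
  have := baireSpace_inter_stabDom hGδ hU x
  have := hx.to_subtype
  exact not_isMeagre_of_mem_residual hxA

lemma exists_mem_vaughtStar_of_mem_vaughtDelta [MeasurableSpace X] [BorelSpace X]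
    (hcont : ContinuousOn (fun p : G × X => pa.act p.1 p.2) {p : G × X | p.2 ∈ pa.dom p.1})
    {A : Set X} (hA : MeasurableSet A) {V : Set G} (hV : IsOpen V) {B : Set (Set G)}
    (hB : IsTopologicalBasis B) {x : X} (hx : x ∈ pa.vaughtDelta A V) :
    ∃ U ∈ B, U ⊆ V ∧ (U ∩ pa.stabDom x).Nonempty ∧ x ∈ pa.vaughtStar A U := by
  borelize ↥(V ∩ pa.stabDom x)
  have hS : BaireMeasurableSet (pa.orbitMap x V ⁻¹' A) :=
    ((continuous_orbitMap hcont x V).measurable hA).baireMeasurableSet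
  obtain ⟨o, ho, ⟨g, hgo⟩, hmeagre⟩ := hS.exists_isOpen_isMeagre_diff hx
  obtain ⟨W, hW, rfl⟩ := isOpen_induced_iff.1 ho
  obtain ⟨U, hUB, hgU, hUWV⟩ := hB.exists_subset_of_mem_open (mem_inter hgo g.2.1) (hW.inter hV)
  have hUV : U ⊆ V := hUWV.trans inter_subset_right
  refine ⟨U, hUB, hUV, ⟨g, hgU, g.2.2⟩, mem_vaughtStar.2 ?_⟩
  refine (hmeagre.preimage_inclusion_inter (hB.isOpen hUB) hUV).mono fun h hh => ?_
  exact ⟨(hUWV h.2.1).1, hh⟩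

lemma vaughtDelta_eq_iUnion_vaughtStar [PolishSpace G] [MeasurableSpace X] [BorelSpace X]
    (hcont : ContinuousOn (fun p : G × X => pa.act p.1 p.2) {p : G × X | p.2 ∈ pa.dom p.1})
    (hGδ : IsGδ {p : G × X | p.2 ∈ pa.dom p.1}) {A : Set X} (hA : MeasurableSet A)
    {V : Set G} (hV : IsOpen V) {B : Set (Set G)} (hB : IsTopologicalBasis B) :
    pa.vaughtDelta A V = ⋃ U ∈ {U ∈ B | U ⊆ V}, (⋃ g ∈ U, pa.dom g) ∩ pa.vaughtStar A U := by
  ext x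
  simp only [mem_iUnion, mem_inter_iff, mem_sep_iff, exists_prop]
  constructor
  · intro hx
    obtain ⟨U, hUB, hUV, ⟨g, hgU, hgx⟩, hxU⟩ :=
      exists_mem_vaughtStar_of_mem_vaughtDelta hcont hA hV hB hx
    exact ⟨U, ⟨hUB, hUV⟩, ⟨g, hgU, hgx⟩, hxU⟩
  · rintro ⟨U, ⟨hUB, hUV⟩, ⟨g, hgU, hgx⟩, hxU⟩
    exact vaughtDelta_mono (hB.isOpen hUB) hUV
      (mem_vaughtDelta_of_mem_vaughtStar hGδ (hB.isOpen hUB) ⟨g, hgU, hgx⟩ hxU)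

theorem measurableSet_vaughtDelta [PolishSpace G] [MeasurableSpace X] [BorelSpace X]
    (hdom : ∀ g, IsOpen (pa.dom g))
    (hcont : ContinuousOn (fun p : G × X => pa.act p.1 p.2) {p : G × X | p.2 ∈ pa.dom p.1})
    (hGδ : IsGδ {p : G × X | p.2 ∈ pa.dom p.1}) {A : Set X} (hA : MeasurableSet A)
    {V : Set G} (hV : IsOpen V) : MeasurableSet (pa.vaughtDelta A V) := by
  obtain ⟨B, hBc, -, hB⟩ := exists_countable_basis G
  induction A, hA using MeasurableSet.induction_on_open generalizing V with
  | isOpen A hA => exact (isOpen_vaughtDelta hdom hcont hGδ hA hV).measurableSet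
  | compl A hA ih =>
    rw [vaughtDelta_eq_iUnion_vaughtStar hcont hGδ hA.compl hV hB]
    refine .biUnion (hBc.mono (sep_subset _ _)) fun U hU => ?_
    refine .inter (isOpen_biUnion fun g _ => hdom g).measurableSet ?_
    rw [vaughtStar_eq_compl_vaughtDelta_compl, compl_compl]
    exact (ih (hB.isOpen hU.1)).compl
  | iUnion A _ _ ih =>
    rw [vaughtDelta_iUnion]
    exact .iUnion fun n => ih n hV

end PartialAction

theorem vaught_borel_general {G X : Type*} [Group G] [TopologicalSpace G]
    [PolishSpace G] [TopologicalSpace X]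
    [MeasurableSpace X] [BorelSpace X]
    (pa : PartialAction G X)
    (hdom : ∀ g, IsOpen (pa.dom g))
    (hcont : ContinuousOn (fun p : G × X => pa.act p.1 p.2) {p : G × X | p.2 ∈ pa.dom p.1})
    (hGδ : IsGδ {p : G × X | p.2 ∈ pa.dom p.1})
    (V : Set G) (hVopen : IsOpen V)
    (A : Set X) (hA : MeasurableSet A) :
    MeasurableSet (pa.vaughtDelta A V) ∧ MeasurableSet (pa.vaughtStar A V) := by
  refine ⟨PartialAction.measurableSet_vaughtDelta hdom hcont hGδ hA hVopen, ?_⟩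
  rw [PartialAction.vaughtStar_eq_compl_vaughtDelta_compl]
  exact (PartialAction.measurableSet_vaughtDelta hdom hcont hGδ hA.compl hVopen).compl

/-- for a continuous partial action of a Polish group on a Polish space
with `G*X` a `G_δ` set, Vaught transforms of Borel sets are Borel. -/
theorem vaught_borel {G X : Type*} [Group G] [TopologicalSpace G] [IsTopologicalGroup G]
    [PolishSpace G] [TopologicalSpace X] [PolishSpace X]
    [MeasurableSpace X] [BorelSpace X]
    (pa : PartialAction G X)
    (hdom : ∀ g, IsOpen (pa.dom g))
    (hcont : ContinuousOn (fun p : G × X => pa.act p.1 p.2) {p : G × X | p.2 ∈ pa.dom p.1})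
    (hGδ : IsGδ {p : G × X | p.2 ∈ pa.dom p.1})
    (V : Set G) (hV : V.Nonempty) (hVopen : IsOpen V)
    (A : Set X) (hA : MeasurableSet A) :
    MeasurableSet (pa.vaughtDelta A V) ∧ MeasurableSet (pa.vaughtStar A V) :=
  vaught_borel_general pa hdom hcont hGδ V hVopen A hA
end

section
/- Let m be a continuous topological partial action of a Polish group G on a Polish space X. For any (g,x) ∈ G × X, the orbit of (g,x) under the partial action \widehat{m}_u(h,y) = (h u⁻¹, u·y) on G × X is homeomorphic to G^x via the map ρ(h) = (hg, h·x), whose inverse is (j,y) ↦ j g⁻¹; in particular, if G*X is G_δ, each \widehat{m}-orbit is a G_δ subset of G × X. -/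
/-!
The orbit of `(a, y)` under `\widehat m` is the graph `{(j, (j⁻¹a)·y) : j⁻¹a ∈ G^y}`, since
`(j, z) = \widehat m_u (a, y)` forces `u = j⁻¹a`. Hence `h ↦ (g h⁻¹, h·x)` is a homeomorphism from
`G^x` onto the orbit of `(g, x)`, with inverse the continuous map `(j, z) ↦ j⁻¹g`. As a graph of a
continuous map over the `G_δ` set `{j | j⁻¹a ∈ G^y}`, the orbit is closed in a `G_δ` subset of a
metrizable space, hence `G_δ`.
-/

open Set TopologicalSpace

theorem IsGδ.setOf_mem_and_eq {Z Y : Type*} [TopologicalSpace Z] [PerfectlyNormalSpace Z]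
    [TopologicalSpace Y] [T2Space Y] {A : Set Z} (hA : IsGδ A) {f φ : Z → Y}
    (hf : ContinuousOn f A) (hφ : ContinuousOn φ A) : IsGδ {z | z ∈ A ∧ f z = φ z} := by
  obtain ⟨C, hC, hCA⟩ :=
    continuousOn_iff_isClosed.1 (hf.prodMk hφ) (diagonal Y) isClosed_diagonal
  have hset : {z | z ∈ A ∧ f z = φ z} = C ∩ A := by
    rw [← hCA]
    ext z
    exact and_comm
  rw [hset]
  exact hC.isGδ.inter hA

namespace PartialAction

variable {G X : Type*} [Group G]

theorem hatOrbitRel_iff (pa : PartialAction G X) {a : G} {y : X} {p : G × X} :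
    pa.hatOrbitRel (a, y) p ↔ y ∈ pa.dom (p.1⁻¹ * a) ∧ pa.act (p.1⁻¹ * a) y = p.2 := by
  constructor
  · rintro ⟨u, hu, rfl⟩
    simpa using hu
  · rintro ⟨hy, hact⟩
    exact ⟨p.1⁻¹ * a, hy, Prod.ext (by simp) hact.symm⟩

variable [TopologicalSpace G] [IsTopologicalGroup G] [TopologicalSpace X]

def hatOrbitHomeomorph (pa : PartialAction G X)
    (hcont : ContinuousOn (fun p : G × X => pa.act p.1 p.2) {p : G × X | p.2 ∈ pa.dom p.1})
    (g : G) (x : X) : pa.stabDom x ≃ₜ {p : G × X | pa.hatOrbitRel (g, x) p} where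
  toFun h := ⟨(g * (h : G)⁻¹, pa.act h x), h, h.2, rfl⟩
  invFun p := ⟨(p : G × X).1⁻¹ * g, (pa.hatOrbitRel_iff.1 p.2).1⟩
  left_inv h := Subtype.ext (by simp)
  right_inv p := Subtype.ext (Prod.ext (by simp) (pa.hatOrbitRel_iff.1 p.2).2)
  continuous_toFun := by
    have hact : Continuous fun h : pa.stabDom x => pa.act h x :=
      hcont.comp_continuous (continuous_subtype_val.prodMk continuous_const) fun h => h.2
    fun_prop
  continuous_invFun := by fun_prop

theorem isGδ_setOf_hatOrbitRel [PseudoMetrizableSpace G] [PseudoMetrizableSpace X] [T2Space X]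
    (pa : PartialAction G X)
    (hcont : ContinuousOn (fun p : G × X => pa.act p.1 p.2) {p : G × X | p.2 ∈ pa.dom p.1})
    (hD : IsGδ {p : G × X | p.2 ∈ pa.dom p.1}) (q : G × X) :
    IsGδ {p : G × X | pa.hatOrbitRel q p} := by
  obtain ⟨a, y⟩ := q
  have hshift : Continuous fun p : G × X => (p.1⁻¹ * a, y) := by fun_prop
  have hA : IsGδ {p : G × X | y ∈ pa.dom (p.1⁻¹ * a)} := hD.preimage hshift
  have hact : ContinuousOn (fun p : G × X => pa.act (p.1⁻¹ * a) y)
      {p : G × X | y ∈ pa.dom (p.1⁻¹ * a)} :=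
    hcont.comp hshift.continuousOn fun _ hp => hp
  convert hA.setOf_mem_and_eq hact continuous_snd.continuousOn using 1
  ext p
  exact pa.hatOrbitRel_iff

end PartialAction

theorem hat_orbit_homeomorph_general {G X : Type*} [Group G] [TopologicalSpace G]
    [IsTopologicalGroup G] [PolishSpace G] [TopologicalSpace X] [PolishSpace X]
    (pa : PartialAction G X)
    (hcont : ContinuousOn (fun p : G × X => pa.act p.1 p.2) {p : G × X | p.2 ∈ pa.dom p.1})
    (g : G) (x : X) :
    (∃ e : ↥(pa.stabDom x) ≃ₜ ↥{p : G × X | pa.hatOrbitRel (g, x) p},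
      (∀ h : ↥(pa.stabDom x), (e h : G × X) = (g * (h : G)⁻¹, pa.act (h : G) x)) ∧
      (∀ p : ↥{p : G × X | pa.hatOrbitRel (g, x) p},
        ((e.symm p : G) = (p : G × X).1⁻¹ * g))) ∧
    (IsGδ {p : G × X | p.2 ∈ pa.dom p.1} →
      ∀ q : G × X, IsGδ {p : G × X | pa.hatOrbitRel q p}) :=
  ⟨⟨pa.hatOrbitHomeomorph hcont g x, fun _ => rfl, fun _ => rfl⟩,
    fun hD => pa.isGδ_setOf_hatOrbitRel hcont hD⟩

/-- for a continuous partial action of a Polish group on a Polish space,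
the orbit of `(g,x)` under the partial action `\widehat m_u (h,y) = (h u⁻¹, u · y)` on
`G × X` is homeomorphic to `G^x` via `ρ(h) = \widehat m_h (g, x) = (g h⁻¹, h · x)`
(in the paper's notation, with inverse recovering `h` from the first coordinate);
in particular, if `G*X` is `G_δ`, every `\widehat m`-orbit is a `G_δ` subset of `G × X`. -/
theorem hat_orbit_homeomorph {G X : Type*} [Group G] [TopologicalSpace G]
    [IsTopologicalGroup G] [PolishSpace G] [TopologicalSpace X] [PolishSpace X]
    (pa : PartialAction G X)
    (hdom : ∀ g, IsOpen (pa.dom g))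
    (hcont : ContinuousOn (fun p : G × X => pa.act p.1 p.2) {p : G × X | p.2 ∈ pa.dom p.1})
    (g : G) (x : X) :
    (∃ e : ↥(pa.stabDom x) ≃ₜ ↥{p : G × X | pa.hatOrbitRel (g, x) p},
      (∀ h : ↥(pa.stabDom x), (e h : G × X) = (g * (h : G)⁻¹, pa.act (h : G) x)) ∧
      (∀ p : ↥{p : G × X | pa.hatOrbitRel (g, x) p},
        ((e.symm p : G) = (p : G × X).1⁻¹ * g))) ∧
    (IsGδ {p : G × X | p.2 ∈ pa.dom p.1} →
      ∀ q : G × X, IsGδ {p : G × X | pa.hatOrbitRel q p}) :=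
  hat_orbit_homeomorph_general pa hcont g x
end

section
/- Consider the partial action of the discrete group ℤ on X = [0,1] given by m_0 = id_X and m_n = id_V for n ≠ 0, where V = (0,1]. Then the enveloping action μ of ℤ on the enveloping space X_ℤ, given by μ_m[(n,x)] = [(n+m,x)], is not continuous at the point [(0,0)] with respect to the Polish topology τ of the standard Borel globalization (in which X_ℤ is Borel isomorphic to T = ({0} × [0,1]) ∪ (ℤ × {0})): μ_1[(0,x)] = [(0,x)] for x > 0 but μ_1[(0,0)] = [(1,0)]. -/
/-- The partial action of `ℤ` (written multiplicatively) on `X = [0,1]` given by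
`m_0 = id_X` and `m_n = id_V` for `n ≠ 0`, where `V = (0,1]`. -/
def pa17 : PartialAction (Multiplicative ℤ) unitInterval where
  dom g := {x | g = 1 ∨ 0 < (x : ℝ)}
  act _ x := x
  mem_dom_one x := Or.inl rfl
  act_one _ := rfl
  mem_dom_inv g x h := by
    rcases h with h | h
    · exact Or.inl (by simp [h])
    · exact Or.inr h
  act_inv_act _ _ _ := rfl
  mem_dom_mul g h x hx hgx := by
    rcases hx with hx | hx
    · rcases hgx with hg | hg
      · exact Or.inl (by simp [hx, hg])
      · exact Or.inr hg
    · exact Or.inr hx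
  act_mul _ _ _ _ _ := rfl

/-- The transversal `T = ({0} × [0,1]) ∪ (ℤ × {0})` of the enveloping space `X_ℤ`. -/
def T17 : Set (Multiplicative ℤ × unitInterval) := {p | p.1 = 1 ∨ p.2 = 0}

theorem ContinuousAt.apply_eq_self_of_mem_closure {X : Type*} [TopologicalSpace X] [T2Space X]
    {f : X → X} {s : Set X} {a : X} (hf : ContinuousAt f a) (hs : Set.EqOn f id s)
    (ha : a ∈ closure s) : f a = a := by
  have := mem_closure_iff_nhdsWithin_neBot.1 ha
  have hfix : f =ᶠ[nhdsWithin a s] id := Filter.eventually_of_mem self_mem_nhdsWithin hs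
  exact tendsto_nhds_unique ((hf.tendsto.mono_left nhdsWithin_le_nhds).congr' hfix)
    (Filter.tendsto_id.mono_left nhdsWithin_le_nhds)

theorem unitInterval.zero_mem_closure_pos :
    (0 : unitInterval) ∈ closure {x : unitInterval | 0 < (x : ℝ)} := by
  have hIoi : {x : unitInterval | 0 < (x : ℝ)} = Set.Ioi 0 := rfl
  rw [hIoi, closure_Ioi' ⟨1, by simp [Set.mem_Ioi]⟩]
  exact Set.self_mem_Ici

namespace pa17

/-- A class invariant separating the classes `{(n, 0)}`. -/
noncomputable def zeroLevel (p : Multiplicative ℤ × unitInterval) : Multiplicative ℤ :=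
  if (p.2 : ℝ) = 0 then p.1 else 1

theorem zeroLevel_eq_of_hatOrbitRel {p q : Multiplicative ℤ × unitInterval}
    (h : pa17.hatOrbitRel p q) : zeroLevel p = zeroLevel q := by
  obtain ⟨u, hu, rfl⟩ := h
  rcases hu with hu | hu
  · simp [zeroLevel, hu, pa17]
  · simp [zeroLevel, hu.ne', pa17]

theorem mk_eq_mk_of_pos (g h : Multiplicative ℤ) {x : unitInterval} (hx : 0 < (x : ℝ)) :
    Quot.mk pa17.hatOrbitRel (g, x) = Quot.mk pa17.hatOrbitRel (h, x) :=
  Quot.sound ⟨h⁻¹ * g, Or.inr hx, by simp [pa17]⟩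

theorem mk_ofAdd_one_zero_ne :
    Quot.mk pa17.hatOrbitRel ((Multiplicative.ofAdd 1 : Multiplicative ℤ), (0 : unitInterval))
      ≠ Quot.mk pa17.hatOrbitRel (1, 0) := by
  intro h
  have := congrArg (Quot.lift zeroLevel fun _ _ => zeroLevel_eq_of_hatOrbitRel) h
  simp [zeroLevel] at this

end pa17

/-- for the partial action of `ℤ` on `[0,1]` above, the enveloping action
`μ_m [(n,x)] = [(n+m,x)]` satisfies `μ_1 [(0,x)] = [(0,x)]` for `x > 0` but
`μ_1 [(0,0)] = [(1,0)] ≠ [(0,0)]`, and `μ_1` is not continuous at `[(0,0)]` with respect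
to any Polish topology `τ` on `X_ℤ` for which the canonical bijection from the transversal
`T = ({0} × [0,1]) ∪ (ℤ × {0})` (which realizes the Borel isomorphism of the standard
Borel globalization) is a homeomorphism. -/
theorem enveloping_action_not_continuous
    (μ : Multiplicative ℤ → Quot pa17.hatOrbitRel → Quot pa17.hatOrbitRel)
    (hμ : ∀ (u g : Multiplicative ℤ) (x : unitInterval),
      μ u (Quot.mk pa17.hatOrbitRel (g, x)) = Quot.mk pa17.hatOrbitRel (u * g, x))
    (τ : TopologicalSpace (Quot pa17.hatOrbitRel))
    (e : @Homeomorph (↥T17) (Quot pa17.hatOrbitRel) _ τ)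
    (he : ∀ p : ↥T17, e p = Quot.mk pa17.hatOrbitRel (p : Multiplicative ℤ × unitInterval)) :
    (∀ x : unitInterval, 0 < (x : ℝ) →
      μ (Multiplicative.ofAdd 1) (Quot.mk pa17.hatOrbitRel (1, x))
        = Quot.mk pa17.hatOrbitRel (1, x)) ∧
    (μ (Multiplicative.ofAdd 1) (Quot.mk pa17.hatOrbitRel (1, 0))
        = Quot.mk pa17.hatOrbitRel (Multiplicative.ofAdd 1, 0)) ∧
    (Quot.mk pa17.hatOrbitRel ((Multiplicative.ofAdd 1 : Multiplicative ℤ), (0 : unitInterval))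
        ≠ Quot.mk pa17.hatOrbitRel (1, 0)) ∧
    ¬ @ContinuousAt _ _ τ τ (μ (Multiplicative.ofAdd 1))
        (Quot.mk pa17.hatOrbitRel (1, (0 : unitInterval))) := by
  let _ := τ
  have : T2Space (Quot pa17.hatOrbitRel) := e.t2Space
  have hfix (x : unitInterval) (hx : 0 < (x : ℝ)) :
      μ (Multiplicative.ofAdd 1) (Quot.mk _ (1, x)) = Quot.mk _ (1, x) := by
    rw [hμ]
    exact pa17.mk_eq_mk_of_pos _ _ hx
  have hzero : μ (Multiplicative.ofAdd 1) (Quot.mk _ (1, 0))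
      = Quot.mk _ (Multiplicative.ofAdd 1, 0) := by
    rw [hμ, mul_one]
  refine ⟨hfix, hzero, pa17.mk_ofAdd_one_zero_ne, fun hcont => pa17.mk_ofAdd_one_zero_ne ?_⟩
  -- `x ↦ [(0, x)]` is continuous for `τ`, since it factors through the transversal.
  set j : unitInterval → Quot pa17.hatOrbitRel := fun x => Quot.mk _ (1, x)
  have hj : Continuous j := by
    have : j = fun x => e ⟨(1, x), Or.inl rfl⟩ := funext fun x => (he ⟨(1, x), Or.inl rfl⟩).symm
    rw [this]
    fun_prop
  rw [← hzero]
  refine hcont.apply_eq_self_of_mem_closure (s := j '' {x | 0 < (x : ℝ)}) ?_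
    (mem_closure_image hj.continuousAt unitInterval.zero_mem_closure_pos)
  rintro _ ⟨x, hx, rfl⟩
  exact hfix x hx
end
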